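/- Let P be a d-dimensional alcoved polytope in ℝ^d with at least one interior lattice point, let F be a facet of P, and let P' be the alcoved polyhedron obtained by removing the facet-defining half-space of F from the irredundant half-space description of P. If P' is unbounded, then F has lattice distance 1 to the set of interior lattice points of P. -/

import Mathlib

open scoped BigOperators Pointwise

/-- A point of `ℝ^d` is a *lattice point* if all its coordinates are integers. -/
def IsLatticePt {d : ℕ} (x : Fin d → ℝ) : Prop := ∀ i, ∃ n : ℤ, x i = (n : ℝ)

/-- A *polytope* in `ℝ^d` is the convex hull of a finite point set. -/
def IsPolytope {d : ℕ} (P : Set (Fin d → ℝ)) : Prop :=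
  ∃ V : Finset (Fin d → ℝ), P = convexHull ℝ (V : Set (Fin d → ℝ))

/-- A *lattice polytope* in `ℝ^d`: the convex hull of finitely many lattice points. -/
def IsLatticePolytope {d : ℕ} (P : Set (Fin d → ℝ)) : Prop :=
  ∃ V : Finset (Fin d → ℝ), (∀ v ∈ V, IsLatticePt v) ∧ P = convexHull ℝ (V : Set (Fin d → ℝ))

/-- Full-dimensional (`d`-dimensional) subset of `ℝ^d`: nonempty interior. -/
def IsFullDim {d : ℕ} (P : Set (Fin d → ℝ)) : Prop := (interior P).Nonempty

/-- `F` is a *facet* of the (full-dimensional) polytope `P` : the intersection of `P`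
with a supporting hyperplane, of affine dimension `d - 1`. -/
def IsFacet {d : ℕ} (P F : Set (Fin d → ℝ)) : Prop :=
  ∃ (a : Fin d → ℝ) (c : ℝ), a ≠ 0 ∧ (∀ x ∈ P, (∑ i, a i * x i) ≤ c) ∧
    F = {x ∈ P | (∑ i, a i * x i) = c} ∧
    Module.finrank ℝ (affineSpan ℝ F).direction = d - 1

/-- Extend `y ∈ ℝ^d` to `Fin (d+1)` by the convention `y₀ = 0`. -/
def extCoord {d : ℕ} (y : Fin d → ℝ) : Fin (d + 1) → ℝ := Fin.cons 0 y

/-- An *alcove hyperplane* in `ℝ^d`: `{y : y_i - y_j = k}` for integer `k` and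
indices `i j ∈ {0, 1, …, d}`, with the convention `y₀ = 0`. -/
def IsAlcoveHyperplane {d : ℕ} (H : Set (Fin d → ℝ)) : Prop :=
  ∃ (i j : Fin (d + 1)) (k : ℤ), i ≠ j ∧
    H = {y : Fin d → ℝ | extCoord y i - extCoord y j = (k : ℝ)}

/-- A `d`-dimensional polytope in `ℝ^d` is an *alcoved polytope* if all of its
facet-defining hyperplanes are alcove hyperplanes. -/
def IsAlcovedPolytope {d : ℕ} (P : Set (Fin d → ℝ)) : Prop :=
  IsPolytope P ∧ IsFullDim P ∧
    ∀ F, IsFacet P F → ∃ H, IsAlcoveHyperplane H ∧ F ⊆ H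

/-- The set of interior lattice points of `P`, as points of `ℤ^d`. -/
def interiorLatticePts {d : ℕ} (P : Set (Fin d → ℝ)) : Set (Fin d → ℤ) :=
  {p | (fun i => (p i : ℝ)) ∈ interior P}

/-- Lattice distance between the hyperplane `{x | a·x = b}` (with `a ∈ ℤ^d`, `b ∈ ℤ`)
and a lattice point `p`: it is `0` if `p` lies on the hyperplane and otherwise `n + 1`,
where `n` is the number of parallel translates of the hyperplane through lattice points
strictly between `p` and the hyperplane. -/
noncomputable def latticeDistAux {d : ℕ} (a : Fin d → ℤ) (b : ℤ) (p : Fin d → ℤ) : ℕ :=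
  if (∑ i, a i * p i) = b then 0
  else Nat.card {c : ℤ // (∃ q : Fin d → ℤ, (∑ i, a i * q i) = c) ∧
      min (∑ i, a i * p i) b < c ∧ c < max (∑ i, a i * p i) b} + 1

/-- Lattice distance between a rational hyperplane `H ⊆ ℝ^d` (given as a set) and a
lattice point `p`. -/
noncomputable def hyperplaneLatticeDist {d : ℕ} (H : Set (Fin d → ℝ)) (p : Fin d → ℤ) : ℕ :=
  sInf {n : ℕ | ∃ (a : Fin d → ℤ) (b : ℤ), a ≠ 0 ∧
    H = {x : Fin d → ℝ | (∑ i, (a i : ℝ) * x i) = (b : ℝ)} ∧ n = latticeDistAux a b p}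

/-- Lattice distance of a facet `F` to a set `S` of lattice points: the minimum over
`p ∈ S` of the lattice distance between `aff F` and `p`. -/
noncomputable def facetLatticeDistSet {d : ℕ} (F : Set (Fin d → ℝ)) (S : Set (Fin d → ℤ)) : ℕ :=
  sInf {n : ℕ | ∃ p ∈ S, hyperplaneLatticeDist ((affineSpan ℝ F : AffineSubspace ℝ (Fin d → ℝ)) : Set (Fin d → ℝ)) p = n}

/-- Number of lattice points in the `t`-th dilate of `P`. -/
noncomputable def latCount {d : ℕ} (P : Set (Fin d → ℝ)) (t : ℕ) : ℕ :=
  Nat.card {p : Fin d → ℤ // (fun i => (p i : ℝ)) ∈ (t : ℝ) • P}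

/-- `h` is the `h^*`-vector of the `d`-dimensional lattice polytope `P ⊆ ℝ^d`:
the (unique) coefficient vector with
`Ehr_P(z) = (h₀ + h₁ z + … + h_d z^d)/(1-z)^{d+1}`, expressed equivalently by
`L_P(t) = ∑ i, h_i * C(t + d - i, d)` for all `t ≥ 1`. -/
def IsHStarVector {d : ℕ} (P : Set (Fin d → ℝ)) (h : Fin (d + 1) → ℤ) : Prop :=
  ∀ t : ℕ, 1 ≤ t →
    (latCount P t : ℤ) = ∑ i : Fin (d + 1), h i * (Nat.choose (t + d - (i : ℕ)) d : ℤ)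

/-- A finite sequence is *unimodal* if it first weakly increases, then weakly decreases. -/
def Unimodal {n : ℕ} (s : Fin n → ℤ) : Prop :=
  ∃ k : Fin n, (∀ i j : Fin n, i ≤ j → j ≤ k → s i ≤ s j) ∧
    (∀ i j : Fin n, k ≤ i → i ≤ j → s j ≤ s i)

/-- `K` is a triangulation of the lattice polytope `P`, i.e. a triangulation of the
point configuration `P ∩ ℤ^d`: a simplicial complex with vertices among the lattice
points of `P` covering `P`. -/
def IsTriangulationOf {d : ℕ} (K : Geometry.SimplicialComplex ℝ (Fin d → ℝ))
    (P : Set (Fin d → ℝ)) : Prop :=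
  K.space = P ∧ ∀ s ∈ K.faces, ∀ x ∈ s, x ∈ P ∧ IsLatticePt x

/-- The lattice `ℤ^d` inside `ℝ^d`, as a `ℤ`-submodule. -/
def latticeSubmodule (d : ℕ) : Submodule ℤ (Fin d → ℝ) :=
  Submodule.span ℤ (Set.range fun i : Fin d => (Pi.single i 1 : Fin d → ℝ))

/-- A full-dimensional lattice simplex (given by its vertex set `s`, `|s| = d+1`) is
*unimodular* if the differences of its vertices with one of them form a `ℤ`-basis of
`ℤ^d`, i.e. they span the lattice `ℤ^d` over `ℤ`. -/
def IsUnimodularSimplex {d : ℕ} (s : Finset (Fin d → ℝ)) : Prop :=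
  s.card = d + 1 ∧ (∀ x ∈ s, IsLatticePt x) ∧
    ∃ v ∈ s, Submodule.span ℤ ((fun x => x - v) '' (s : Set (Fin d → ℝ))) = latticeSubmodule d

/-- A *unimodular triangulation* of `P`: all full-dimensional simplices are unimodular. -/
def IsUnimodularTriangulation {d : ℕ} (K : Geometry.SimplicialComplex ℝ (Fin d → ℝ))
    (P : Set (Fin d → ℝ)) : Prop :=
  IsTriangulationOf K P ∧ ∀ s ∈ K.faces, s.card = d + 1 → IsUnimodularSimplex s

/-- The subcomplex of `K` induced on the boundary lattice points `(∂P) ∩ ℤ^d`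
(i.e. all faces of `K` whose vertices lie in `∂P`) is a triangulation of `∂P`,
i.e. it covers `∂P`. -/
def BoundaryInducedIsTriangulation {d : ℕ} (K : Geometry.SimplicialComplex ℝ (Fin d → ℝ))
    (P : Set (Fin d → ℝ)) : Prop :=
  (⋃ s ∈ {s ∈ K.faces | ∀ x ∈ s, x ∈ frontier P},
      convexHull ℝ (s : Set (Fin d → ℝ))) = frontier P

/-- `K` is a *regular* triangulation of `P`: there is a height function `w` on the
lattice points of `P` whose lower convex hull projects to `K`; equivalently every face
of `K` is the domain of equality of an affine functional lying strictly below the lift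
of all other lattice points of `P`. -/
def IsRegularTriangulation {d : ℕ} (K : Geometry.SimplicialComplex ℝ (Fin d → ℝ))
    (P : Set (Fin d → ℝ)) : Prop :=
  ∃ w : (Fin d → ℝ) → ℝ, ∀ s ∈ K.faces,
    ∃ ℓ : (Fin d → ℝ) →ᵃ[ℝ] ℝ, (∀ x ∈ s, ℓ x = w x) ∧
      ∀ x : Fin d → ℝ, IsLatticePt x → x ∈ P → x ∉ s → ℓ x < w x

/-- The union of all alcove hyperplanes in `ℝ^d`. -/
def alcoveUnion (d : ℕ) : Set (Fin d → ℝ) := {y | ∃ H, IsAlcoveHyperplane H ∧ y ∈ H}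

/-- The polytope `Q_d = {y ∈ ℝ^d : y_i - y_j ≤ 1 for all 0 ≤ i, j ≤ d}` (with `y₀ = 0`),
the minimal-volume alcoved polytope with the origin in its interior. -/
def Qd (d : ℕ) : Set (Fin d → ℝ) :=
  {y | ∀ i j : Fin (d + 1), extCoord y i - extCoord y j ≤ 1}

/-- The polyhedron obtained from `P` by removing the facet-defining half-space of the
facet `F` from the (irredundant) half-space description of `P`: the intersection of the
facet-defining half-spaces of all facets of `P` other than `F`. -/
def removeFacetHalfspace {d : ℕ} (P F : Set (Fin d → ℝ)) : Set (Fin d → ℝ) :=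
  {x | ∀ (a : Fin d → ℝ) (c : ℝ), a ≠ 0 → (∀ y ∈ P, (∑ i, a i * y i) ≤ c) →
    IsFacet P {y ∈ P | (∑ i, a i * y i) = c} →
    {y ∈ P | (∑ i, a i * y i) = c} ≠ F →
    (∑ i, a i * x i) ≤ c}

/-! Write the facet as `F = {y ∈ P | y_i - y_j = k}` with `P ⊆ {y_i - y_j ≤ k}`. Every interior
lattice point has lattice distance at least `1` from `F`, and exactly `1` if `p_i - p_j = k - 1`;
so it suffices to find an interior lattice point with `p_i - p_j = k - 1`.

Since `P'` is unbounded it contains a ray, with some direction `u`. As `P` is bounded and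
`P = P' ∩ {y_i - y_j ≤ k}`, the direction `u` increases `y_i - y_j`, and it weakly decreases
`y_{i'} - y_{j'}` for every other facet `y_{i'} - y_{j'} ≤ k'` of `P`. The integer vector `w`
whose extended coordinates are `1` where those of `u` are at least `u_i` (shifted so that the
`0`-th one vanishes) has the same sign pattern, and `w_i - w_j = 1`. Hence, for an interior
lattice point `q`, the point `p = q + (k - 1 - (q_i - q_j)) • w` stays in the interior of `P'`
and lies strictly inside the half-space of `F`, so it is an interior lattice point of `P` with
`p_i - p_j = k - 1`.

In dimension at most one `P'` is always bounded; in dimension at least two facets are nonempty.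
The identity `P = P' ∩ {y_i - y_j ≤ k}` says that a full-dimensional polytope is cut out by its
facet inequalities; it is proved by rotating a supporting hyperplane around the vertices it
touches until it becomes a facet hyperplane. -/

open Bornology Filter Module Set Topology

variable {d : ℕ}

section DotProduct

variable {ι : Type*}

lemma intCast_comp_ne_zero {a : ι → ℤ} (ha : a ≠ 0) : (Int.cast ∘ a : ι → ℝ) ≠ 0 :=
  fun h => ha (funext fun l => by simpa using congrFun h l)

variable [Fintype ι]

lemma dotProduct_lt_of_mem_interior {s : Set (ι → ℝ)} {a x : ι → ℝ} {c : ℝ}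
    (ha : a ≠ 0) (hs : ∀ y ∈ s, a ⬝ᵥ y ≤ c) (hx : x ∈ interior s) : a ⬝ᵥ x < c := by
  have hline : Tendsto (fun t : ℝ => x + t • a) (𝓝 0) (𝓝 x) :=
    Continuous.tendsto' (by fun_prop) 0 x (by simp)
  obtain ⟨t, hts, ht⟩ := ((hline.eventually (mem_interior_iff_mem_nhds.1 hx)).filter_mono
    nhdsWithin_le_nhds |>.and (self_mem_nhdsWithin (s := Ioi 0))).exists
  have hle := hs _ hts
  rw [dotProduct_add, dotProduct_smul, smul_eq_mul] at hle
  have hpos : 0 < a ⬝ᵥ a :=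
    lt_of_le_of_ne (Finset.sum_nonneg fun i _ => mul_self_nonneg (a i))
      (Ne.symm (mt dotProduct_self_eq_zero.1 ha))
  nlinarith [mul_pos (show (0 : ℝ) < t from ht) hpos]

lemma not_subset_hyperplane_of_interior_nonempty {s : Set (ι → ℝ)} {a : ι → ℝ}
    (hs : (interior s).Nonempty) (ha : a ≠ 0) (c : ℝ) : ¬ s ⊆ {x | a ⬝ᵥ x = c} := by
  intro h
  obtain ⟨x, hx⟩ := hs
  exact (dotProduct_lt_of_mem_interior ha (fun y hy => (h hy).le) hx).ne (h (interior_subset hx))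

lemma dotProduct_nonpos_of_forall_add_smul_le {a x u : ι → ℝ} {c : ℝ}
    (h : ∀ t : ℝ, 0 ≤ t → a ⬝ᵥ (x + t • u) ≤ c) : a ⬝ᵥ u ≤ 0 := by
  by_contra! hu
  have hx : a ⬝ᵥ x ≤ c := by simpa using h 0 le_rfl
  have := h ((c - a ⬝ᵥ x + 1) / a ⬝ᵥ u) (by positivity)
  rw [dotProduct_add, dotProduct_smul, smul_eq_mul, div_mul_cancel₀ _ hu.ne'] at this
  linarith

lemma lt_dotProduct_of_mem_segment {a q x z : ι → ℝ} {c : ℝ} (hz : z ∈ segment ℝ q x)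
    (hzx : z ≠ x) (hq : a ⬝ᵥ q < c) (hzc : a ⬝ᵥ z = c) : c < a ⬝ᵥ x := by
  obtain ⟨s, t, hs, ht, hst, rfl⟩ := hz
  rw [dotProduct_add, dotProduct_smul, dotProduct_smul, smul_eq_mul, smul_eq_mul] at hzc
  by_contra! hxc
  have hsum : s * (c - a ⬝ᵥ q) + t * (c - a ⬝ᵥ x) = 0 := by linear_combination c * hst - hzc
  have hs0 : s = 0 := by
    refine (mul_eq_zero.1 ?_).resolve_right (sub_pos.2 hq).ne'
    linarith [mul_nonneg hs (sub_nonneg.2 hq.le), mul_nonneg ht (sub_nonneg.2 hxc)]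
  obtain rfl : t = 1 := by linarith
  simp [hs0] at hzx

lemma exists_eq_dotProduct [DecidableEq ι] (f : (ι → ℝ) →ₗ[ℝ] ℝ) :
    ∃ a : ι → ℝ, ∀ x, f x = a ⬝ᵥ x :=
  ⟨(dotProductEquiv ℝ ι).symm f, fun x =>
    (LinearMap.congr_fun ((dotProductEquiv ℝ ι).apply_symm_apply f) x).symm⟩

lemma exists_smul_of_setOf_dotProduct_eq {a a' : ι → ℝ} {c c' : ℝ} (ha' : a' ≠ 0)
    (h : {x : ι → ℝ | a ⬝ᵥ x = c} = {x | a' ⬝ᵥ x = c'}) :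
    ∃ r : ℝ, a = r • a' ∧ c = r * c' := by
  classical
  have hpos : a' ⬝ᵥ a' ≠ 0 := mt dotProduct_self_eq_zero.1 ha'
  have hmem : ∀ x, a' ⬝ᵥ x = c' → a ⬝ᵥ x = c := fun x hx => (h.symm ▸ hx : x ∈ {x | a ⬝ᵥ x = c})
  set x₀ := (c' / a' ⬝ᵥ a') • a'
  have hx₀ : a' ⬝ᵥ x₀ = c' := by simp [x₀, dotProduct_smul, div_mul_cancel₀ _ hpos]
  set r := a ⬝ᵥ a' / a' ⬝ᵥ a'
  -- every `y` splits as a multiple of `a'` plus a vector of the hyperplane through `0`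
  have hlin : ∀ y, a ⬝ᵥ y = r * a' ⬝ᵥ y := by
    intro y
    set y' := y - (a' ⬝ᵥ y / a' ⬝ᵥ a') • a'
    have hy' : a' ⬝ᵥ (x₀ + y') = c' := by
      simp [y', dotProduct_add, dotProduct_sub, dotProduct_smul, hx₀, div_mul_cancel₀ _ hpos]
    have := hmem _ hy'
    rw [dotProduct_add, hmem _ hx₀] at this
    simp only [y', dotProduct_sub, dotProduct_smul, smul_eq_mul] at this
    rw [show a ⬝ᵥ y = a' ⬝ᵥ y / a' ⬝ᵥ a' * a ⬝ᵥ a' by linarith]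
    ring
  refine ⟨r, ?_, ?_⟩
  · ext l
    simpa [dotProduct_single] using hlin (Pi.single l 1)
  · rw [← hmem _ hx₀, hlin, hx₀]

lemma intCast_dotProduct (v w : ι → ℤ) :
    ((v ⬝ᵥ w : ℤ) : ℝ) = (Int.cast ∘ v : ι → ℝ) ⬝ᵥ (Int.cast ∘ w) := by
  simp [dotProduct]


end DotProduct

section Hyperplanes

lemma finrank_ker_dotProductEquiv {a : Fin d → ℝ} (ha : a ≠ 0) :
    finrank ℝ (LinearMap.ker (dotProductEquiv ℝ (Fin d) a)) = d - 1 := by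
  have := Module.Dual.finrank_ker_add_one_of_ne_zero
    ((dotProductEquiv ℝ (Fin d)).map_ne_zero_iff.2 ha)
  rw [finrank_fin_fun] at this
  omega

lemma vectorSpan_le_ker_of_subset_hyperplane {s : Set (Fin d → ℝ)} {a : Fin d → ℝ} {c : ℝ}
    (h : s ⊆ {x | a ⬝ᵥ x = c}) : vectorSpan ℝ s ≤ LinearMap.ker (dotProductEquiv ℝ (Fin d) a) := by
  rw [vectorSpan_def, Submodule.span_le]
  rintro _ ⟨x, hx, y, hy, rfl⟩
  simp [dotProduct_sub, show a ⬝ᵥ x = c from h hx, show a ⬝ᵥ y = c from h hy]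

lemma finrank_direction_affineSpan_of_subset_hyperplane {s t : Set (Fin d → ℝ)}
    {a : Fin d → ℝ} {c : ℝ} (ha : a ≠ 0) (hst : s ⊆ t) (ht : t ⊆ {x | a ⬝ᵥ x = c})
    (hs : finrank ℝ (vectorSpan ℝ s) = d - 1) :
    finrank ℝ (affineSpan ℝ t).direction = d - 1 := by
  rw [direction_affineSpan]
  refine le_antisymm ?_ (hs ▸ Submodule.finrank_mono (vectorSpan_mono ℝ hst))
  rw [← finrank_ker_dotProductEquiv ha]
  exact Submodule.finrank_mono (vectorSpan_le_ker_of_subset_hyperplane ht)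

lemma coe_affineSpan_eq_hyperplane {s : Set (Fin d → ℝ)} {a : Fin d → ℝ} {c : ℝ} (ha : a ≠ 0)
    (hne : s.Nonempty) (hs : s ⊆ {x | a ⬝ᵥ x = c})
    (hrk : finrank ℝ (affineSpan ℝ s).direction = d - 1) :
    (affineSpan ℝ s : Set (Fin d → ℝ)) = {x | a ⬝ᵥ x = c} := by
  obtain ⟨z, hz⟩ := hne
  have hle : (affineSpan ℝ s).direction ≤ LinearMap.ker (dotProductEquiv ℝ (Fin d) a) := by
    rw [direction_affineSpan]; exact vectorSpan_le_ker_of_subset_hyperplane hs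
  have hdir := Submodule.eq_of_le_of_finrank_le hle (by rw [finrank_ker_dotProductEquiv ha, hrk])
  ext x
  rw [SetLike.mem_coe, ← AffineSubspace.vsub_right_mem_direction_iff_mem
    (subset_affineSpan ℝ s hz), hdir]
  simp [dotProduct_sub, show a ⬝ᵥ z = c from hs hz, sub_eq_zero]

lemma nonempty_of_finrank_direction_affineSpan {s : Set (Fin d → ℝ)} (hd : 2 ≤ d)
    (h : finrank ℝ (affineSpan ℝ s).direction = d - 1) : s.Nonempty := by
  by_contra hs
  rw [not_nonempty_iff_eq_empty] at hs
  subst hs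
  rw [AffineSubspace.span_empty, AffineSubspace.direction_bot, finrank_bot] at h
  omega

end Hyperplanes

section Polytopes

lemma mem_convexHull_filter_of_dotProduct_eq {ι : Type*} [Fintype ι] {V : Finset (ι → ℝ)}
    {a z : ι → ℝ} {c : ℝ} (hval : ∀ v ∈ V, a ⬝ᵥ v ≤ c)
    (hz : z ∈ convexHull ℝ (V : Set (ι → ℝ))) (hzc : a ⬝ᵥ z = c) :
    z ∈ convexHull ℝ (↑(V.filter (a ⬝ᵥ · = c)) : Set (ι → ℝ)) := by
  rw [Finset.mem_convexHull'] at hz ⊢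
  obtain ⟨w, hw0, hw1, rfl⟩ := hz
  have hslack : ∑ v ∈ V, w v * (c - a ⬝ᵥ v) = 0 := by
    simp only [mul_sub, Finset.sum_sub_distrib, ← Finset.sum_mul, hw1, one_mul, ← hzc,
      dotProduct_sum, dotProduct_smul, smul_eq_mul, sub_self]
  have hzero : ∀ v ∈ V, w v ≠ 0 → a ⬝ᵥ v = c := fun v hv hw => by
    have := (Finset.sum_eq_zero_iff_of_nonneg fun v hv =>
      mul_nonneg (hw0 v hv) (sub_nonneg.2 (hval v hv))).1 hslack v hv
    linarith [(mul_eq_zero.1 this).resolve_left hw]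
  refine ⟨w, fun v hv => hw0 v (Finset.mem_filter.1 hv).1, ?_, ?_⟩
  · rwa [Finset.sum_filter_of_ne hzero]
  · exact Finset.sum_filter_of_ne fun v hv h => hzero v hv (left_ne_zero_of_smul h)

/-- Tilts `a ⬝ᵥ x ≤ c` to `(a + t • b) ⬝ᵥ x ≤ c + t * c₂` with the least `t > 0` at which it
touches a further vertex. -/
lemma exists_tilt_of_exists_lt {ι : Type*} [Fintype ι] {V : Finset (ι → ℝ)} {a b w₀ : ι → ℝ}
    {c c₂ : ℝ} (hval : ∀ v ∈ V, a ⬝ᵥ v ≤ c) (hb : ∀ v ∈ V, a ⬝ᵥ v = c → b ⬝ᵥ v = c₂)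
    (haw : a ⬝ᵥ w₀ = 0) (hbw : b ⬝ᵥ w₀ ≠ 0) (hlt : ∃ v ∈ V, c₂ < b ⬝ᵥ v) :
    ∃ a' c', a' ≠ 0 ∧ (∀ v ∈ V, a' ⬝ᵥ v ≤ c') ∧ (∀ v ∈ V, a ⬝ᵥ v = c → a' ⬝ᵥ v = c') ∧
      ∃ w ∈ V, a' ⬝ᵥ w = c' ∧ a ⬝ᵥ w ≠ c := by
  classical
  set W := V.filter (c₂ < b ⬝ᵥ ·)
  have hWne : W.Nonempty := by
    obtain ⟨v, hv, hlt⟩ := hlt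
    exact ⟨v, Finset.mem_filter.2 ⟨hv, hlt⟩⟩
  have hWlt : ∀ v ∈ W, a ⬝ᵥ v < c := fun v hv => by
    obtain ⟨hvV, hvb⟩ := Finset.mem_filter.1 hv
    exact (hval v hvV).lt_of_ne fun h => (hb v hvV h ▸ hvb).false
  obtain ⟨w, hwW, hwmin⟩ := W.exists_min_image (fun v => (c - a ⬝ᵥ v) / (b ⬝ᵥ v - c₂)) hWne
  obtain ⟨hwV, hwb⟩ := Finset.mem_filter.1 hwW
  set t := (c - a ⬝ᵥ w) / (b ⬝ᵥ w - c₂)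
  have hden : 0 < b ⬝ᵥ w - c₂ := by linarith
  have ht : 0 < t := div_pos (by linarith [hWlt w hwW]) hden
  refine ⟨a + t • b, c + t * c₂, fun h => ?_, fun v hv => ?_, fun v hv h => ?_,
    w, hwV, ?_, (hWlt w hwW).ne⟩
  · have := congrArg (· ⬝ᵥ w₀) h
    simp only [add_dotProduct, smul_dotProduct, haw, smul_eq_mul, zero_dotProduct] at this
    exact hbw ((mul_eq_zero.1 (by linarith)).resolve_left ht.ne')
  · rw [add_dotProduct, smul_dotProduct, smul_eq_mul]
    by_cases hvb : c₂ < b ⬝ᵥ v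
    · have := hwmin v (Finset.mem_filter.2 ⟨hv, hvb⟩)
      rw [le_div_iff₀ (by linarith)] at this
      linarith
    · nlinarith [hval v hv]
  · rw [add_dotProduct, smul_dotProduct, smul_eq_mul, h, hb v hv h]
  · rw [add_dotProduct, smul_dotProduct, smul_eq_mul]
    simp only [t]
    field_simp [hden.ne']
    ring

variable {V : Finset (Fin d → ℝ)}

lemma exists_tilt_of_finrank_ne {a : Fin d → ℝ} {c : ℝ}
    (hfull : (interior (convexHull ℝ (V : Set (Fin d → ℝ)))).Nonempty) (ha : a ≠ 0)
    (hval : ∀ v ∈ V, a ⬝ᵥ v ≤ c) (hne : ∃ v ∈ V, a ⬝ᵥ v = c)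
    (hrk : finrank ℝ (vectorSpan ℝ (↑(V.filter (a ⬝ᵥ · = c)) : Set (Fin d → ℝ))) ≠ d - 1) :
    ∃ a' c', a' ≠ 0 ∧ (∀ v ∈ V, a' ⬝ᵥ v ≤ c') ∧ (∀ v ∈ V, a ⬝ᵥ v = c → a' ⬝ᵥ v = c') ∧
      ∃ w ∈ V, a' ⬝ᵥ w = c' ∧ a ⬝ᵥ w ≠ c := by
  classical
  set S : Set (Fin d → ℝ) := ↑(V.filter (a ⬝ᵥ · = c))
  have hle : vectorSpan ℝ S ≤ LinearMap.ker (dotProductEquiv ℝ (Fin d) a) :=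
    vectorSpan_le_ker_of_subset_hyperplane fun v hv => (Finset.mem_filter.1 hv).2
  -- the tilting direction `b` is constant on the touched vertices but not along `ker a`
  obtain ⟨w₀, hw₀a, hw₀S⟩ := SetLike.exists_of_lt (lt_of_le_of_ne hle fun h =>
    hrk (by rw [h, finrank_ker_dotProductEquiv ha]))
  obtain ⟨f, hfw, hSf⟩ := Submodule.exists_le_ker_of_notMem hw₀S
  obtain ⟨b, hfb⟩ := exists_eq_dotProduct f
  obtain ⟨z, hzV, hz⟩ := hne
  have hzS : z ∈ S := Finset.mem_filter.2 ⟨hzV, hz⟩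
  have hb : ∀ v ∈ V, a ⬝ᵥ v = c → b ⬝ᵥ v = b ⬝ᵥ z := fun v hv h => by
    have := hSf (vsub_mem_vectorSpan ℝ (Finset.mem_filter.2 ⟨hv, h⟩ : v ∈ S) hzS)
    rwa [LinearMap.mem_ker, hfb, vsub_eq_sub, dotProduct_sub, sub_eq_zero] at this
  have haw : a ⬝ᵥ w₀ = 0 := by simpa using hw₀a
  have hbw : b ⬝ᵥ w₀ ≠ 0 := hfb w₀ ▸ hfw
  obtain ⟨v, hv, hvb⟩ : ∃ v ∈ V, b ⬝ᵥ v ≠ b ⬝ᵥ z := by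
    by_contra! h
    refine not_subset_hyperplane_of_interior_nonempty hfull (a := b) (fun h0 => hbw (by simp [h0]))
      (b ⬝ᵥ z) (convexHull_min (fun v hv => h v hv)
        (convex_hyperplane (dotProductEquiv ℝ (Fin d) b).isLinear _))
  rcases hvb.lt_or_gt with hlt | hgt
  · exact exists_tilt_of_exists_lt hval (b := -b) (c₂ := -(b ⬝ᵥ z))
      (fun v hv h => by rw [neg_dotProduct, hb v hv h]) haw (by rwa [neg_dotProduct, neg_ne_zero])
      ⟨v, hv, by rw [neg_dotProduct]; linarith⟩
  · exact exists_tilt_of_exists_lt hval hb haw hbw ⟨v, hv, hgt⟩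

lemma exists_facet_of_supporting {a : Fin d → ℝ} {c : ℝ}
    (hfull : (interior (convexHull ℝ (V : Set (Fin d → ℝ)))).Nonempty) (ha : a ≠ 0)
    (hval : ∀ v ∈ V, a ⬝ᵥ v ≤ c) (hne : ∃ v ∈ V, a ⬝ᵥ v = c) :
    ∃ a' c', a' ≠ 0 ∧ (∀ v ∈ V, a' ⬝ᵥ v ≤ c') ∧ (∀ v ∈ V, a ⬝ᵥ v = c → a' ⬝ᵥ v = c') ∧
      finrank ℝ (vectorSpan ℝ (↑(V.filter (a' ⬝ᵥ · = c')) : Set (Fin d → ℝ))) = d - 1 := by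
  classical
  obtain ⟨n, hn⟩ : ∃ n, (V.filter (a ⬝ᵥ · ≠ c)).card = n := ⟨_, rfl⟩
  induction n using Nat.strong_induction_on generalizing a c with
  | _ n ih =>
  by_cases hrk : finrank ℝ (vectorSpan ℝ (↑(V.filter (a ⬝ᵥ · = c)) : Set (Fin d → ℝ))) = d - 1
  · exact ⟨a, c, ha, hval, fun _ _ h => h, hrk⟩
  obtain ⟨a', c', ha', hval', hpres, w, hwV, hw', hw⟩ :=
    exists_tilt_of_finrank_ne hfull ha hval hne hrk
  have hcard : (V.filter (a' ⬝ᵥ · ≠ c')).card < n := by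
    rw [← hn]
    refine Finset.card_lt_card ⟨fun v hv => ?_, fun h => ?_⟩
    · obtain ⟨hvV, hv'⟩ := Finset.mem_filter.1 hv
      exact Finset.mem_filter.2 ⟨hvV, fun h => hv' (hpres v hvV h)⟩
    · exact (Finset.mem_filter.1 (h (Finset.mem_filter.2 ⟨hwV, hw⟩))).2 hw'
  obtain ⟨a'', c'', ha'', hval'', hpres', hrk''⟩ := ih _ hcard ha' hval'
    (by obtain ⟨v, hv, h⟩ := hne; exact ⟨v, hv, hpres v hv h⟩) rfl
  exact ⟨a'', c'', ha'', hval'', fun v hv h => hpres' v hv (hpres v hv h), hrk''⟩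

lemma exists_mem_segment_notMem_interior {E : Type*} [NormedAddCommGroup E] [NormedSpace ℝ E]
    {P : Set E} (hP : IsClosed P) {q x : E} (hq : q ∈ interior P) (hx : x ∉ P) :
    ∃ z ∈ segment ℝ q x, z ∈ P ∧ z ∉ interior P := by
  by_contra! h
  have hseg : segment ℝ q x ⊆ interior P :=
    (convex_segment q x).isPreconnected.subset_left_of_subset_union isOpen_interior
      hP.isOpen_compl (disjoint_compl_right.mono_left interior_subset)
      (fun z hz => (em (z ∈ P)).imp (h z hz) id) ⟨q, left_mem_segment ℝ q x, hq⟩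
  exact hx (interior_subset (hseg (right_mem_segment ℝ q x)))

lemma exists_supporting_dotProduct {ι : Type*} [Fintype ι] [DecidableEq ι] {P : Set (ι → ℝ)}
    (hconv : Convex ℝ P) (hclosed : IsClosed P) (hint : (interior P).Nonempty) {z : ι → ℝ}
    (hz : z ∉ interior P) : ∃ a ≠ 0, ∀ y ∈ P, a ⬝ᵥ y ≤ a ⬝ᵥ z := by
  obtain ⟨f, hf⟩ := geometric_hahn_banach_open_point hconv.interior isOpen_interior hz
  obtain ⟨a, hfa⟩ := exists_eq_dotProduct f.toLinearMap
  simp only [ContinuousLinearMap.coe_coe] at hfa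
  obtain ⟨q, hq⟩ := hint
  refine ⟨a, fun h => by simpa [hfa, h] using hf q hq, fun y hy => ?_⟩
  rw [← hclosed.closure_eq, ← hconv.closure_interior_eq_closure_of_nonempty_interior ⟨q, hq⟩]
    at hy
  have : closure (interior P) ⊆ {y | f y ≤ f z} :=
    closure_minimal (fun y hy => (hf y hy).le) (isClosed_le f.continuous continuous_const)
  simpa [hfa] using this hy

lemma exists_facet_of_notMem_interior {P : Set (Fin d → ℝ)} (hP : P = convexHull ℝ ↑V)
    (hfull : (interior P).Nonempty) {z : Fin d → ℝ} (hzP : z ∈ P) (hz : z ∉ interior P) :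
    ∃ a c, a ≠ 0 ∧ (∀ y ∈ P, a ⬝ᵥ y ≤ c) ∧ a ⬝ᵥ z = c ∧
      finrank ℝ (affineSpan ℝ {y ∈ P | a ⬝ᵥ y = c}).direction = d - 1 := by
  classical
  have hclosed : IsClosed P := by
    rw [hP]; exact (V.finite_toSet.isCompact_convexHull ℝ).isClosed
  obtain ⟨a₀, ha₀, hval₀⟩ :=
    exists_supporting_dotProduct (hP ▸ convex_convexHull ℝ _) hclosed hfull hz
  have hVP : ∀ v ∈ V, v ∈ P := fun v hv => hP ▸ subset_convexHull ℝ _ hv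
  have hzS := mem_convexHull_filter_of_dotProduct_eq (fun v hv => hval₀ v (hVP v hv))
    (hP ▸ hzP) rfl
  obtain ⟨v₀, hv₀⟩ : (V.filter (a₀ ⬝ᵥ · = a₀ ⬝ᵥ z)).Nonempty := by
    by_contra! h; simp [h] at hzS
  obtain ⟨a, c, ha, hval, hpres, hrk⟩ := exists_facet_of_supporting (hP ▸ hfull) ha₀
    (fun v hv => hval₀ v (hVP v hv)) ⟨v₀, (Finset.mem_filter.1 hv₀).1, (Finset.mem_filter.1 hv₀).2⟩
  refine ⟨a, c, ha, fun y hy => ?_, ?_, finrank_direction_affineSpan_of_subset_hyperplane ha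
    (fun v hv => ⟨hVP v (Finset.mem_filter.1 hv).1, (Finset.mem_filter.1 hv).2⟩)
    (fun y hy => hy.2) hrk⟩
  · exact convexHull_min (fun v hv => hval v hv) (convex_halfSpace_le
      (dotProductEquiv ℝ (Fin d) a).isLinear c) (hP ▸ hy)
  · refine convexHull_min (fun v hv => ?_) (convex_hyperplane
      (dotProductEquiv ℝ (Fin d) a).isLinear c) hzS
    exact hpres v (Finset.mem_filter.1 hv).1 (Finset.mem_filter.1 hv).2

lemma exists_facet_lt_of_notMem {P : Set (Fin d → ℝ)} (hP : P = convexHull ℝ ↑V)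
    (hfull : (interior P).Nonempty) {x : Fin d → ℝ} (hx : x ∉ P) :
    ∃ a c, a ≠ 0 ∧ (∀ y ∈ P, a ⬝ᵥ y ≤ c) ∧ c < a ⬝ᵥ x ∧ {y ∈ P | a ⬝ᵥ y = c}.Nonempty ∧
      finrank ℝ (affineSpan ℝ {y ∈ P | a ⬝ᵥ y = c}).direction = d - 1 := by
  obtain ⟨q, hq⟩ := hfull
  have hclosed : IsClosed P := by
    rw [hP]; exact (V.finite_toSet.isCompact_convexHull ℝ).isClosed
  obtain ⟨z, hzqx, hzP, hz⟩ := exists_mem_segment_notMem_interior hclosed hq hx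
  obtain ⟨a, c, ha, hval, hzc, hrk⟩ := exists_facet_of_notMem_interior hP ⟨q, hq⟩ hzP hz
  exact ⟨a, c, ha, hval, lt_dotProduct_of_mem_segment hzqx (fun h => hx (h ▸ hzP))
    (dotProduct_lt_of_mem_interior ha hval hq) hzc, ⟨z, hzP, hzc⟩, hrk⟩

end Polytopes

section Alcoves

/-- The integer normal vector of the alcove hyperplanes `y_i - y_j = k` (with `y_0 = 0`). -/
def alcoveNormal (i j : Fin (d + 1)) : Fin d → ℤ :=
  fun l => (if l.succ = i then 1 else 0) - (if l.succ = j then 1 else 0)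

lemma intCast_alcoveNormal_dotProduct {R : Type*} [CommRing R] (i j : Fin (d + 1))
    (y : Fin d → R) :
    (Int.cast ∘ alcoveNormal i j : Fin d → R) ⬝ᵥ y =
      (Fin.cons 0 y : Fin (d + 1) → R) i - (Fin.cons 0 y : Fin (d + 1) → R) j := by
  have key : ∀ m : Fin (d + 1),
      ∑ l, (if l.succ = m then y l else 0) = (Fin.cons 0 y : Fin (d + 1) → R) m := by
    intro m
    cases m using Fin.cases with
    | zero => simp [Fin.succ_ne_zero]
    | succ m => simp [Fin.succ_inj]
  simp only [dotProduct, Function.comp_apply, alcoveNormal, Int.cast_sub, Int.cast_ite,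
    Int.cast_one, Int.cast_zero, sub_mul, ite_mul, one_mul, zero_mul, Finset.sum_sub_distrib, key]

lemma alcoveNormal_dotProduct (i j : Fin (d + 1)) (w : Fin d → ℤ) :
    alcoveNormal i j ⬝ᵥ w =
      (Fin.cons 0 w : Fin (d + 1) → ℤ) i - (Fin.cons 0 w : Fin (d + 1) → ℤ) j := by
  have h := intCast_alcoveNormal_dotProduct i j w
  rwa [show (Int.cast ∘ alcoveNormal i j : Fin d → ℤ) = alcoveNormal i j from
    funext fun _ => Int.cast_id] at h

lemma intCast_alcoveNormal_dotProduct_eq_extCoord (i j : Fin (d + 1)) (y : Fin d → ℝ) :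
    (Int.cast ∘ alcoveNormal i j : Fin d → ℝ) ⬝ᵥ y = extCoord y i - extCoord y j :=
  intCast_alcoveNormal_dotProduct i j y

lemma alcoveNormal_dotProduct_sub (g : Fin (d + 1) → ℤ) (i j : Fin (d + 1)) :
    alcoveNormal i j ⬝ᵥ (fun l => g l.succ - g 0) = g i - g j := by
  have hcons : ∀ m, (Fin.cons 0 (fun l => g l.succ - g 0) : Fin (d + 1) → ℤ) m = g m - g 0 := by
    intro m
    cases m using Fin.cases <;> simp
  rw [alcoveNormal_dotProduct, hcons, hcons]
  ring

lemma alcoveNormal_ne_zero {i j : Fin (d + 1)} (hij : i ≠ j) : alcoveNormal i j ≠ 0 := by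
  intro h
  have := alcoveNormal_dotProduct_sub (fun m => if m = i then 1 else 0) i j
  simp [h, hij.symm] at this

lemma alcoveNormal_swap (i j : Fin (d + 1)) : alcoveNormal j i = -alcoveNormal i j := by
  ext l
  simp [alcoveNormal]

/-- `w` records which extended coordinates of `u` are at least `u_i`. -/
lemma exists_int_rounding {u : Fin d → ℝ} {i j : Fin (d + 1)}
    (hu : 0 < (Int.cast ∘ alcoveNormal i j : Fin d → ℝ) ⬝ᵥ u) :
    ∃ w : Fin d → ℤ, alcoveNormal i j ⬝ᵥ w = 1 ∧ ∀ i' j',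
      (Int.cast ∘ alcoveNormal i' j' : Fin d → ℝ) ⬝ᵥ u ≤ 0 → alcoveNormal i' j' ⬝ᵥ w ≤ 0 := by
  set g : Fin (d + 1) → ℤ := fun m => if extCoord u i ≤ extCoord u m then 1 else 0
  rw [intCast_alcoveNormal_dotProduct_eq_extCoord] at hu
  refine ⟨fun l => g l.succ - g 0, ?_, fun i' j' h => ?_⟩
  · rw [alcoveNormal_dotProduct_sub]
    simp [g, show ¬ extCoord u i ≤ extCoord u j by linarith]
  · rw [intCast_alcoveNormal_dotProduct_eq_extCoord] at h
    have hmono : extCoord u i ≤ extCoord u i' → extCoord u i ≤ extCoord u j' :=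
      fun h' => h'.trans (by linarith)
    rw [alcoveNormal_dotProduct_sub]
    simp only [g]
    split_ifs <;> simp_all

lemma exists_pos_smul_alcoveNormal_of_isFacet {P : Set (Fin d → ℝ)}
    (halc : ∀ G, IsFacet P G → ∃ H, IsAlcoveHyperplane H ∧ G ⊆ H) (hd : 2 ≤ d)
    {a : Fin d → ℝ} {c : ℝ} (ha : a ≠ 0) (hG : IsFacet P {y ∈ P | a ⬝ᵥ y = c}) :
    ∃ (i j : Fin (d + 1)) (k : ℤ) (r : ℝ), i ≠ j ∧ 0 < r ∧
      a = r • (Int.cast ∘ alcoveNormal i j) ∧ c = r * k := by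
  obtain ⟨H, ⟨i, j, k, hij, rfl⟩, hGH⟩ := halc _ hG
  obtain ⟨-, -, -, -, -, hrk⟩ := hG
  have hne := nonempty_of_finrank_direction_affineSpan hd hrk
  have hα := intCast_comp_ne_zero (alcoveNormal_ne_zero hij)
  have hGα : {y ∈ P | a ⬝ᵥ y = c} ⊆ {x | (Int.cast ∘ alcoveNormal i j) ⬝ᵥ x = (k : ℝ)} :=
    fun y hy => by simpa [intCast_alcoveNormal_dotProduct_eq_extCoord] using hGH hy
  obtain ⟨r, rfl, rfl⟩ := exists_smul_of_setOf_dotProduct_eq hα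
    ((coe_affineSpan_eq_hyperplane ha hne (fun y hy => hy.2) hrk).symm.trans
      (coe_affineSpan_eq_hyperplane hα hne hGα hrk))
  rcases lt_trichotomy r 0 with hr | rfl | hr
  · refine ⟨j, i, -k, -r, hij.symm, by linarith, ?_, by push_cast; ring⟩
    rw [alcoveNormal_swap]
    ext l
    simp only [Pi.smul_apply, Function.comp_apply, Pi.neg_apply, Int.cast_neg,
      smul_eq_mul]
    ring
  · simp at ha
  · exact ⟨i, j, k, r, hij, hr, rfl, rfl⟩

end Alcoves

section Recession

variable {E : Type*} [NormedAddCommGroup E] [NormedSpace ℝ E]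

lemma exists_ray_subset_of_not_isBounded [ProperSpace E] {S : Set E} (hconv : Convex ℝ S)
    (hclosed : IsClosed S) {x₀ : E} (hx₀ : x₀ ∈ S) (hub : ¬ IsBounded S) :
    ∃ u ≠ 0, ∀ t : ℝ, 0 ≤ t → x₀ + t • u ∈ S := by
  have hfar : ∀ n : ℕ, ∃ x ∈ S, (n : ℝ) < ‖x - x₀‖ := fun n => by
    by_contra! h
    exact hub ((Metric.isBounded_closedBall (x := x₀) (r := n)).subset fun x hx => by
      simpa [dist_eq_norm] using h x hx)
  choose xs hxsS hxs using hfar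
  have hpos : ∀ n, 0 < ‖xs n - x₀‖ := fun n => (Nat.cast_nonneg n).trans_lt (hxs n)
  set us : ℕ → E := fun n => ‖xs n - x₀‖⁻¹ • (xs n - x₀)
  have hus : ∀ n, us n ∈ Metric.sphere (0 : E) 1 := fun n => by
    simp [us, norm_smul, (hpos n).ne']
  obtain ⟨u, hu, φ, hφ, hlim⟩ := (isCompact_sphere (0 : E) 1).tendsto_subseq hus
  refine ⟨u, ne_zero_of_mem_unit_sphere ⟨u, hu⟩, fun t ht => ?_⟩
  have hseg : ∀ n, t ≤ ‖xs n - x₀‖ → x₀ + t • us n ∈ S := fun n hn => by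
    have := hconv.add_smul_sub_mem hx₀ (hxsS n)
      ⟨div_nonneg ht (hpos n).le, (div_le_one (hpos n)).2 hn⟩
    rwa [div_eq_mul_inv, mul_smul] at this
  refine hclosed.mem_of_tendsto ((hlim.const_smul t).const_add x₀)
    (eventually_atTop.2 ⟨⌈t⌉₊, fun n hn => hseg _ ?_⟩)
  calc t ≤ ⌈t⌉₊ := Nat.le_ceil t
    _ ≤ φ n := by exact_mod_cast hn.trans (hφ.id_le n)
    _ ≤ ‖xs (φ n) - x₀‖ := (hxs _).le

lemma not_isBounded_of_ray_subset {S : Set E} {x₀ u : E} (hu : u ≠ 0)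
    (hray : ∀ t : ℝ, 0 ≤ t → x₀ + t • u ∈ S) : ¬ IsBounded S := by
  intro hS
  obtain ⟨R, hR⟩ := (isBounded_iff_forall_norm_le.1 hS)
  have hu' : 0 < ‖u‖ := norm_pos_iff.2 hu
  have hR0 : 0 ≤ R := (norm_nonneg _).trans (hR _ (by simpa using hray 0 le_rfl))
  have h := hR _ (hray ((R + ‖x₀‖ + 1) / ‖u‖) (by positivity))
  have := norm_sub_le (x₀ + ((R + ‖x₀‖ + 1) / ‖u‖) • u) x₀
  rw [add_sub_cancel_left, norm_smul, Real.norm_of_nonneg (by positivity),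
    div_mul_cancel₀ _ hu'.ne'] at this
  linarith

end Recession

section RemoveFacet

variable {P F : Set (Fin d → ℝ)}

/-- The inequalities `a ⬝ᵥ x ≤ c` cutting out `removeFacetHalfspace P F`. -/
def IsKeptFacetIneq (P F : Set (Fin d → ℝ)) (a : Fin d → ℝ) (c : ℝ) : Prop :=
  a ≠ 0 ∧ (∀ y ∈ P, a ⬝ᵥ y ≤ c) ∧ IsFacet P {y ∈ P | a ⬝ᵥ y = c} ∧ {y ∈ P | a ⬝ᵥ y = c} ≠ F

lemma removeFacetHalfspace_eq_iInter :
    removeFacetHalfspace P F = ⋂ (a) (c) (_ : IsKeptFacetIneq P F a c), {x | a ⬝ᵥ x ≤ c} := by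
  ext x
  simp only [removeFacetHalfspace, IsKeptFacetIneq, mem_iInter, and_imp]
  rfl

lemma mem_removeFacetHalfspace_iff {x : Fin d → ℝ} :
    x ∈ removeFacetHalfspace P F ↔ ∀ a c, IsKeptFacetIneq P F a c → a ⬝ᵥ x ≤ c := by
  simp [removeFacetHalfspace_eq_iInter]

lemma subset_removeFacetHalfspace : P ⊆ removeFacetHalfspace P F :=
  fun y hy => mem_removeFacetHalfspace_iff.2 fun _ _ h => h.2.1 y hy

lemma convex_removeFacetHalfspace : Convex ℝ (removeFacetHalfspace P F) := by
  rw [removeFacetHalfspace_eq_iInter]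
  exact convex_iInter fun a => convex_iInter fun c => convex_iInter fun _ =>
    convex_halfSpace_le (dotProductEquiv ℝ (Fin d) a).isLinear c

lemma isClosed_removeFacetHalfspace : IsClosed (removeFacetHalfspace P F) := by
  rw [removeFacetHalfspace_eq_iInter]
  exact isClosed_iInter fun a => isClosed_iInter fun c => isClosed_iInter fun _ =>
    isClosed_le (by fun_prop) continuous_const

lemma add_smul_mem_removeFacetHalfspace {w x : Fin d → ℝ}
    (hw : ∀ a c, IsKeptFacetIneq P F a c → a ⬝ᵥ w ≤ 0) (hx : x ∈ removeFacetHalfspace P F)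
    {t : ℝ} (ht : 0 ≤ t) : x + t • w ∈ removeFacetHalfspace P F := by
  refine mem_removeFacetHalfspace_iff.2 fun a c h => ?_
  rw [dotProduct_add, dotProduct_smul, smul_eq_mul]
  nlinarith [mem_removeFacetHalfspace_iff.1 hx a c h, hw a c h]

lemma add_smul_mem_interior_removeFacetHalfspace {w x : Fin d → ℝ}
    (hw : ∀ a c, IsKeptFacetIneq P F a c → a ⬝ᵥ w ≤ 0)
    (hx : x ∈ interior (removeFacetHalfspace P F)) {t : ℝ} (ht : 0 ≤ t) :
    x + t • w ∈ interior (removeFacetHalfspace P F) := by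
  have : (· + t • w) '' interior (removeFacetHalfspace P F) ⊆
      interior (removeFacetHalfspace P F) :=
    interior_maximal (image_subset_iff.2 fun y hy =>
      add_smul_mem_removeFacetHalfspace hw (interior_subset hy) ht)
      (isOpenMap_add_right _ _ isOpen_interior)
  exact this ⟨x, hx, rfl⟩

lemma mem_of_mem_removeFacetHalfspace {V : Finset (Fin d → ℝ)} (hP : P = convexHull ℝ ↑V)
    (hfull : (interior P).Nonempty) {a₀ : Fin d → ℝ} {c₀ : ℝ} (ha₀ : a₀ ≠ 0)
    (hval₀ : ∀ y ∈ P, a₀ ⬝ᵥ y ≤ c₀) (hF : F = {y ∈ P | a₀ ⬝ᵥ y = c₀}) {x : Fin d → ℝ}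
    (hx : x ∈ removeFacetHalfspace P F) (hxc : a₀ ⬝ᵥ x ≤ c₀) : x ∈ P := by
  by_contra hxP
  obtain ⟨a, c, ha, hval, hlt, hne, hrk⟩ := exists_facet_lt_of_notMem hP hfull hxP
  by_cases hGF : {y ∈ P | a ⬝ᵥ y = c} = F
  · -- two inequalities defining the same facet are positive multiples of each other
    obtain ⟨q, hq⟩ := hfull
    have hspan := coe_affineSpan_eq_hyperplane ha hne (fun y hy => hy.2) hrk
    rw [hGF] at hspan hne hrk
    obtain ⟨r, rfl, rfl⟩ := exists_smul_of_setOf_dotProduct_eq ha₀ (hspan.symm.trans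
      (coe_affineSpan_eq_hyperplane ha₀ hne (by rw [hF]; exact fun y hy => hy.2) hrk))
    have hq₀ := dotProduct_lt_of_mem_interior ha₀ hval₀ hq
    have hq₁ := dotProduct_lt_of_mem_interior ha hval hq
    rw [smul_dotProduct, smul_eq_mul] at hq₁ hlt
    have hr : 0 < r := by nlinarith
    nlinarith
  · exact hlt.not_ge (mem_removeFacetHalfspace_iff.1 hx a c
      ⟨ha, hval, ⟨a, c, ha, hval, rfl, hrk⟩, hGF⟩)

end RemoveFacet

section DimensionOne

lemma isFacet_of_dim_one {P : Set (Fin 1 → ℝ)} {a : Fin 1 → ℝ} {c : ℝ} (ha : a ≠ 0)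
    (hval : ∀ y ∈ P, a ⬝ᵥ y ≤ c) : IsFacet P {y ∈ P | a ⬝ᵥ y = c} := by
  refine ⟨a, c, ha, hval, rfl, ?_⟩
  have ha0 : a 0 ≠ 0 := fun h => ha (funext fun l => by rwa [Subsingleton.elim l 0])
  have hsub : {y ∈ P | a ⬝ᵥ y = c}.Subsingleton := fun y hy y' hy' => by
    have h := hy.2.trans hy'.2.symm
    simp only [dotProduct, Fin.sum_univ_one] at h
    exact funext fun l => by rw [Subsingleton.elim l 0, mul_left_cancel₀ ha0 h]
  rw [direction_affineSpan, vectorSpan_of_subsingleton ℝ hsub, finrank_bot]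

/-- In dimension one every value at or beyond the maximum of `a ⬝ᵥ ·` on `P` gives a facet, so
at least one of them is kept in `removeFacetHalfspace P F`. -/
lemma exists_bound_removeFacetHalfspace_of_dim_one {P F : Set (Fin 1 → ℝ)} (hP : IsCompact P)
    (hne : P.Nonempty) {a : Fin 1 → ℝ} (ha : a ≠ 0) :
    ∃ C, ∀ x ∈ removeFacetHalfspace P F, a ⬝ᵥ x ≤ C := by
  obtain ⟨y₀, hy₀, hmax⟩ :=
    hP.exists_isMaxOn hne (continuous_const.dotProduct continuous_id).continuousOn
  have hval : ∀ y ∈ P, a ⬝ᵥ y ≤ a ⬝ᵥ y₀ := fun y hy => hmax hy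
  have hkept : ∀ c, a ⬝ᵥ y₀ ≤ c → {y ∈ P | a ⬝ᵥ y = c} ≠ F →
      ∀ x ∈ removeFacetHalfspace P F, a ⬝ᵥ x ≤ c := fun c hc hF x hx =>
    mem_removeFacetHalfspace_iff.1 hx a c
      ⟨ha, fun y hy => (hval y hy).trans hc,
        isFacet_of_dim_one ha fun y hy => (hval y hy).trans hc, hF⟩
  by_cases hF : {y ∈ P | a ⬝ᵥ y = a ⬝ᵥ y₀} = F
  · refine ⟨_, hkept (a ⬝ᵥ y₀ + 1) (by linarith) fun h => ?_⟩
    have : y₀ ∈ {y ∈ P | a ⬝ᵥ y = a ⬝ᵥ y₀ + 1} := h ▸ hF ▸ ⟨hy₀, rfl⟩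
    linarith [this.2]
  · exact ⟨_, hkept _ le_rfl hF⟩

lemma isBounded_removeFacetHalfspace_of_dim_one {P F : Set (Fin 1 → ℝ)} (hP : IsCompact P)
    (hne : P.Nonempty) : IsBounded (removeFacetHalfspace P F) := by
  obtain ⟨C₁, h₁⟩ := exists_bound_removeFacetHalfspace_of_dim_one (F := F) hP hne
    (a := 1) one_ne_zero
  obtain ⟨C₂, h₂⟩ := exists_bound_removeFacetHalfspace_of_dim_one (F := F) hP hne
    (a := -1) (neg_ne_zero.2 one_ne_zero)
  refine forall_isBounded_image_eval_iff.1 fun i => (Metric.isBounded_Icc (-C₂) C₁).subset ?_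
  rintro _ ⟨x, hx, rfl⟩
  have hx₁ := h₁ x hx
  have hx₂ := h₂ x hx
  simp only [dotProduct, Fin.sum_univ_one, Pi.one_apply, Pi.neg_apply, one_mul, neg_mul] at hx₁ hx₂
  rw [Subsingleton.elim i 0]
  exact ⟨by linarith, hx₁⟩

lemma two_le_of_not_isBounded_removeFacetHalfspace {P F : Set (Fin d → ℝ)} (hP : IsCompact P)
    (hne : P.Nonempty) (hub : ¬ IsBounded (removeFacetHalfspace P F)) : 2 ≤ d := by
  by_contra! hd
  interval_cases d
  · exact hub (Set.toFinite _).isBounded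
  · exact hub (isBounded_removeFacetHalfspace_of_dim_one hP hne)

end DimensionOne

section LatticeDistance

lemma one_le_latticeDistAux {a p : Fin d → ℤ} {b : ℤ} (h : a ⬝ᵥ p ≠ b) :
    1 ≤ latticeDistAux a b p := by
  unfold latticeDistAux
  rw [if_neg (show ∑ i, a i * p i ≠ b from h)]
  omega

lemma latticeDistAux_eq_one {a p : Fin d → ℤ} {b : ℤ} (h : a ⬝ᵥ p = b - 1) :
    latticeDistAux a b p = 1 := by
  unfold latticeDistAux
  have h' : ∑ i, a i * p i = b - 1 := h
  rw [if_neg (by omega), add_eq_right, Nat.card_eq_zero]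
  refine Or.inl ⟨fun ⟨c, _, h₁, h₂⟩ => ?_⟩
  rw [h'] at h₁ h₂
  omega

lemma one_le_hyperplaneLatticeDist {a p : Fin d → ℤ} {b : ℤ} (ha : a ≠ 0) (hp : a ⬝ᵥ p ≠ b) :
    1 ≤ hyperplaneLatticeDist {x | (Int.cast ∘ a : Fin d → ℝ) ⬝ᵥ x = b} p := by
  refine le_csInf ⟨_, a, b, ha, rfl, rfl⟩ ?_
  rintro _ ⟨a', b', -, hH, rfl⟩
  refine one_le_latticeDistAux fun h' => hp ?_
  have : (Int.cast ∘ p : Fin d → ℝ) ∈ {x | (Int.cast ∘ a : Fin d → ℝ) ⬝ᵥ x = b} := by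
    rw [hH]
    exact_mod_cast (intCast_dotProduct a' p).symm.trans (congrArg Int.cast h')
  exact_mod_cast (intCast_dotProduct a p).trans this

lemma hyperplaneLatticeDist_le {a p : Fin d → ℤ} {b : ℤ} (ha : a ≠ 0) :
    hyperplaneLatticeDist {x | (Int.cast ∘ a : Fin d → ℝ) ⬝ᵥ x = b} p ≤ latticeDistAux a b p :=
  Nat.sInf_le ⟨a, b, ha, rfl, rfl⟩

lemma facetLatticeDistSet_eq_one {F : Set (Fin d → ℝ)} {S : Set (Fin d → ℤ)} {a p : Fin d → ℤ}
    {b : ℤ} (ha : a ≠ 0)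
    (hF : (affineSpan ℝ F : Set (Fin d → ℝ)) = {x | (Int.cast ∘ a : Fin d → ℝ) ⬝ᵥ x = b})
    (hS : ∀ r ∈ S, a ⬝ᵥ r ≠ b) (hp : p ∈ S) (hpb : a ⬝ᵥ p = b - 1) :
    facetLatticeDistSet F S = 1 := by
  unfold facetLatticeDistSet
  rw [hF]
  have hp₁ : hyperplaneLatticeDist {x | (Int.cast ∘ a : Fin d → ℝ) ⬝ᵥ x = b} p = 1 :=
    le_antisymm ((hyperplaneLatticeDist_le ha).trans (latticeDistAux_eq_one hpb).le)
      (one_le_hyperplaneLatticeDist ha (by omega))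
  refine le_antisymm (Nat.sInf_le ⟨p, hp, hp₁⟩) (le_csInf ⟨1, p, hp, hp₁⟩ ?_)
  rintro _ ⟨r, hr, rfl⟩
  exact one_le_hyperplaneLatticeDist ha (hS r hr)

lemma dotProduct_lt_of_mem_interiorLatticePts {P : Set (Fin d → ℝ)} {a r : Fin d → ℤ} {b : ℤ}
    (ha : a ≠ 0) (hval : ∀ y ∈ P, (Int.cast ∘ a : Fin d → ℝ) ⬝ᵥ y ≤ b)
    (hr : r ∈ interiorLatticePts P) : a ⬝ᵥ r < b := by
  exact_mod_cast (intCast_dotProduct a r).trans_lt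
    (dotProduct_lt_of_mem_interior (intCast_comp_ne_zero ha) hval hr)

end LatticeDistance

section MainArgument

variable {P F : Set (Fin d → ℝ)}

lemma IsFacet.exists_alcoveNormal (hF : IsFacet P F)
    (halc : ∀ G, IsFacet P G → ∃ H, IsAlcoveHyperplane H ∧ G ⊆ H) (hd : 2 ≤ d) :
    ∃ (i j : Fin (d + 1)) (k : ℤ), i ≠ j ∧
      (∀ y ∈ P, (Int.cast ∘ alcoveNormal i j : Fin d → ℝ) ⬝ᵥ y ≤ k) ∧
      F = {y ∈ P | (Int.cast ∘ alcoveNormal i j : Fin d → ℝ) ⬝ᵥ y = k} ∧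
      (affineSpan ℝ F : Set (Fin d → ℝ)) =
        {x | (Int.cast ∘ alcoveNormal i j : Fin d → ℝ) ⬝ᵥ x = k} := by
  obtain ⟨a, c, ha, hval, hFeq, hrk⟩ := id hF
  replace hFeq : F = {y ∈ P | a ⬝ᵥ y = c} := hFeq
  replace hval : ∀ y ∈ P, a ⬝ᵥ y ≤ c := hval
  subst hFeq
  obtain ⟨i, j, k, r, hij, hr, rfl, rfl⟩ := exists_pos_smul_alcoveNormal_of_isFacet halc hd ha hF
  have hF' : {y ∈ P | (r • (Int.cast ∘ alcoveNormal i j)) ⬝ᵥ y = r * k} =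
      {y ∈ P | (Int.cast ∘ alcoveNormal i j : Fin d → ℝ) ⬝ᵥ y = k} := by
    ext y
    simp [smul_dotProduct, hr.ne']
  rw [hF'] at hrk ⊢
  refine ⟨i, j, k, hij, fun y hy => ?_, rfl, coe_affineSpan_eq_hyperplane
    (fun h => ha (by rw [h, smul_zero])) (nonempty_of_finrank_direction_affineSpan hd hrk)
    (fun y hy => hy.2) hrk⟩
  have := hval y hy
  rw [smul_dotProduct, smul_eq_mul] at this
  exact le_of_mul_le_mul_left this hr

lemma exists_dotProduct_pos_of_not_isBounded {V : Finset (Fin d → ℝ)}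
    (hP : P = convexHull ℝ ↑V) (hfull : (interior P).Nonempty) {a₀ : Fin d → ℝ} {c₀ : ℝ}
    (ha₀ : a₀ ≠ 0) (hval₀ : ∀ y ∈ P, a₀ ⬝ᵥ y ≤ c₀) (hF : F = {y ∈ P | a₀ ⬝ᵥ y = c₀})
    (hub : ¬ IsBounded (removeFacetHalfspace P F)) :
    ∃ u, 0 < a₀ ⬝ᵥ u ∧ ∀ a c, IsKeptFacetIneq P F a c → a ⬝ᵥ u ≤ 0 := by
  obtain ⟨q, hq⟩ := hfull
  have hqP := interior_subset hq
  obtain ⟨u, hu, hray⟩ := exists_ray_subset_of_not_isBounded convex_removeFacetHalfspace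
    isClosed_removeFacetHalfspace (subset_removeFacetHalfspace hqP) hub
  refine ⟨u, ?_, fun a c h => dotProduct_nonpos_of_forall_add_smul_le fun t ht =>
    mem_removeFacetHalfspace_iff.1 (hray t ht) a c h⟩
  by_contra! hle
  refine not_isBounded_of_ray_subset hu (fun t ht => mem_of_mem_removeFacetHalfspace hP ⟨q, hq⟩
    ha₀ hval₀ hF (hray t ht) ?_) (hP ▸ (V.finite_toSet.isCompact_convexHull ℝ).isBounded)
  rw [dotProduct_add, dotProduct_smul, smul_eq_mul]
  nlinarith [hval₀ q hqP]

/-- Every kept facet normal is a positive multiple of an alcove normal, so the rounding of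
`exists_int_rounding` preserves the signs `a ⬝ᵥ u ≤ 0`. -/
lemma exists_int_recession_dir
    (halc : ∀ G, IsFacet P G → ∃ H, IsAlcoveHyperplane H ∧ G ⊆ H) (hd : 2 ≤ d)
    {i j : Fin (d + 1)} {u : Fin d → ℝ}
    (hu : 0 < (Int.cast ∘ alcoveNormal i j : Fin d → ℝ) ⬝ᵥ u)
    (hkept : ∀ a c, IsKeptFacetIneq P F a c → a ⬝ᵥ u ≤ 0) :
    ∃ w : Fin d → ℤ, alcoveNormal i j ⬝ᵥ w = 1 ∧
      ∀ a c, IsKeptFacetIneq P F a c → a ⬝ᵥ (Int.cast ∘ w) ≤ 0 := by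
  obtain ⟨w, hw, hmono⟩ := exists_int_rounding hu
  refine ⟨w, hw, fun a c h => ?_⟩
  obtain ⟨i', j', k', r, -, hr, rfl, rfl⟩ :=
    exists_pos_smul_alcoveNormal_of_isFacet halc hd h.1 h.2.2.1
  have hru := hkept _ _ h
  rw [smul_dotProduct, smul_eq_mul] at hru ⊢
  have hw' := hmono i' j' (nonpos_of_mul_nonpos_right hru hr)
  rw [← intCast_dotProduct]
  exact mul_nonpos_of_nonneg_of_nonpos hr.le (by exact_mod_cast hw')

lemma exists_mem_interiorLatticePts_eq_sub_one {V : Finset (Fin d → ℝ)}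
    (hP : P = convexHull ℝ ↑V) {a₀ : Fin d → ℤ} {k : ℤ} (ha₀ : a₀ ≠ 0)
    (hval₀ : ∀ y ∈ P, (Int.cast ∘ a₀ : Fin d → ℝ) ⬝ᵥ y ≤ k)
    (hF : F = {y ∈ P | (Int.cast ∘ a₀ : Fin d → ℝ) ⬝ᵥ y = k}) {w : Fin d → ℤ}
    (hw : a₀ ⬝ᵥ w = 1) (hwkept : ∀ a c, IsKeptFacetIneq P F a c → a ⬝ᵥ (Int.cast ∘ w) ≤ 0)
    {q : Fin d → ℤ} (hq : q ∈ interiorLatticePts P) :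
    ∃ p ∈ interiorLatticePts P, a₀ ⬝ᵥ p = k - 1 := by
  have ha₀' := intCast_comp_ne_zero ha₀
  have hqk := dotProduct_lt_of_mem_interiorLatticePts ha₀ hval₀ hq
  set N := k - 1 - a₀ ⬝ᵥ q
  have hpk : a₀ ⬝ᵥ (q + N • w) = k - 1 := by
    rw [dotProduct_add, dotProduct_smul, hw, smul_eq_mul, mul_one]
    simp only [N]
    ring
  refine ⟨q + N • w, ?_, hpk⟩
  have hcast : (Int.cast ∘ (q + N • w) : Fin d → ℝ) = Int.cast ∘ q + (N : ℝ) • Int.cast ∘ w := by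
    ext l
    simp
  have hsub : interior (removeFacetHalfspace P F) ∩ {x | (Int.cast ∘ a₀) ⬝ᵥ x < (k : ℝ)} ⊆ P :=
    fun x hx => mem_of_mem_removeFacetHalfspace hP ⟨_, hq⟩ ha₀' hval₀ hF
      (interior_subset hx.1) hx.2.le
  have hopen : IsOpen (interior (removeFacetHalfspace P F) ∩
      {x | (Int.cast ∘ a₀ : Fin d → ℝ) ⬝ᵥ x < (k : ℝ)}) :=
    isOpen_interior.inter (isOpen_lt (by fun_prop) continuous_const)
  show (Int.cast ∘ (q + N • w) : Fin d → ℝ) ∈ interior P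
  refine interior_maximal hsub hopen ⟨?_, ?_⟩
  · rw [hcast]
    exact add_smul_mem_interior_removeFacetHalfspace hwkept
      (interior_mono subset_removeFacetHalfspace hq) (by exact_mod_cast (by omega : 0 ≤ N))
  · show (Int.cast ∘ a₀ : Fin d → ℝ) ⬝ᵥ (Int.cast ∘ (q + N • w)) < k
    rw [← intCast_dotProduct]
    exact_mod_cast (by omega : a₀ ⬝ᵥ (q + N • w) < k)

end MainArgument

/-- Let `P` be a `d`-dimensional alcoved polytope with an interior
lattice point, `F` a facet of `P`, and `P'` the alcoved polyhedron obtained by removing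
the facet-defining half-space of `F` from the half-space description of `P`. If `P'` is
unbounded, then `F` has lattice distance `1` to the set of interior lattice points. -/
theorem stmt13 (d : ℕ) (P : Set (Fin d → ℝ)) (hP : IsAlcovedPolytope P)
    (hint : (interiorLatticePts P).Nonempty)
    (F : Set (Fin d → ℝ)) (hF : IsFacet P F)
    (hub : ¬ Bornology.IsBounded (removeFacetHalfspace P F)) :
    facetLatticeDistSet F (interiorLatticePts P) = 1 := by
  obtain ⟨⟨V, rfl⟩, hfull, halc⟩ := hP
  obtain ⟨q, hq⟩ := hint
  have hd : 2 ≤ d := two_le_of_not_isBounded_removeFacetHalfspace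
    (V.finite_toSet.isCompact_convexHull ℝ) ⟨_, interior_subset hq⟩ hub
  obtain ⟨i, j, k, hij, hval, rfl, hspan⟩ := hF.exists_alcoveNormal halc hd
  obtain ⟨u, hu, hkept⟩ := exists_dotProduct_pos_of_not_isBounded rfl hfull
    (intCast_comp_ne_zero (alcoveNormal_ne_zero hij)) hval rfl hub
  obtain ⟨w, hw, hwkept⟩ := exists_int_recession_dir halc hd hu hkept
  obtain ⟨p, hp, hpk⟩ := exists_mem_interiorLatticePts_eq_sub_one rfl (alcoveNormal_ne_zero hij)
    hval rfl hw hwkept hq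
  exact facetLatticeDistSet_eq_one (alcoveNormal_ne_zero hij) hspan
    (fun r hr => (dotProduct_lt_of_mem_interiorLatticePts (alcoveNormal_ne_zero hij) hval hr).ne)
    hp hpk
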